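/- Define a^k_λ for a partition λ ⊢ n as the coefficient of any permutation of cycle-type λ in h_k(J_1,...,J_n). Then for any partition ρ and k ≥ 1: a^k_{ρ∪(1)} = a^k_ρ + Σ_{i=1}^{ℓ(ρ)} ρ_i · a^{k-1}_{ρ\(ρ_i)∪(ρ_i+1)}. -/

import Mathlib

open Finset
open scoped Classical

/-- The Jucys-Murphy element `J_i = Σ_{j<i} (j i)` in the group algebra `ℤ[S_n]`. -/
noncomputable def JM (n : ℕ) (i : Fin n) : MonoidAlgebra ℤ (Equiv.Perm (Fin n)) :=
  ∑ j ∈ Finset.univ.filter (fun j : Fin n => j < i),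
    MonoidAlgebra.of ℤ (Equiv.Perm (Fin n)) (Equiv.swap j i)

/-- Evaluation of the complete homogeneous symmetric polynomial `h_k` at a family
of (pairwise commuting) elements: sum over weakly increasing sequences. -/
noncomputable def hEval {n : ℕ} {A : Type*} [Ring A] (k : ℕ) (g : Fin n → A) : A :=
  ∑ f ∈ Finset.univ.filter (fun f : Fin k → Fin n => Monotone f),
    (List.ofFn (fun t => g (f t))).prod

/-- The cycle type of a permutation including its fixed points (as parts equal to 1),
i.e. the partition of `n` recording all cycle lengths. -/
def fullCycleType {n : ℕ} (σ : Equiv.Perm (Fin n)) : Multiset ℕ :=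
  σ.cycleType + Multiset.replicate (n - σ.cycleType.sum) 1

/-- The coefficient of a group element in an element of the group algebra. -/
noncomputable def coeffOf {G : Type*} (x : MonoidAlgebra ℤ G) (g : G) : ℤ :=
  x.coeff g

/-!
Put `m = |ρ|` and let `σ ∈ S_{m+1}` have cycle type `ρ ∪ (1)` and fix `m+1`.
Splitting the monotone sequences by whether they reach `m+1` gives
`h_k(J_1, …, J_{m+1}) = h_k(J_1, …, J_m) + h_{k-1}(J_1, …, J_{m+1}) J_{m+1}`.
The first summand lies in `ℤ[S_m]`, so its coefficient at `σ` is `a^k_ρ`. Since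
`J_{m+1} = Σ_{j ≤ m} (j m+1)`, the coefficient of `σ` in the second summand is
`Σ_j a^{k-1}(type of σ (j m+1))`, and `σ (j m+1)` is `σ` with the fixed point `m+1` inserted
into the cycle through `j`. Each part `ρ_i` is the cycle length of exactly `ρ_i` such `j`.
-/

open Equiv Equiv.Perm

theorem Equiv.Perm.viaEmbedding_swap {α β : Type*} [DecidableEq α] [DecidableEq β] (ι : α ↪ β)
    (a b : α) : (swap a b).viaEmbedding ι = swap (ι a) (ι b) := by
  ext x
  by_cases hx : x ∈ Set.range ι
  · obtain ⟨c, rfl⟩ := hx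
    rw [viaEmbedding_apply, swap_apply_def, swap_apply_def]
    simp only [ι.injective.eq_iff]
    split_ifs <;> rfl
  · rw [viaEmbedding_apply_of_notMem _ _ x hx,
      swap_apply_of_ne_of_ne (fun h => hx ⟨a, h.symm⟩) fun h => hx ⟨b, h.symm⟩]

namespace Equiv.Perm
variable {α : Type*} [Fintype α] [DecidableEq α]

theorem toList_eq_cons {p : Perm α} {x : α} (hx : x ∈ p.support) :
    ∃ t, toList p x = x :: t := by
  obtain ⟨z, t, ht⟩ := List.exists_cons_of_ne_nil (toList_eq_nil_iff.not_left.mpr hx)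
  have := toList_getElem_zero p x hx
  simp only [ht, List.getElem_cons_zero] at this
  exact ⟨t, this ▸ ht⟩

theorem IsCycle.mul_swap_of_mem_of_notMem {c : Perm α} (hc : c.IsCycle) {x y : α}
    (hx : x ∈ c.support) (hy : y ∉ c.support) :
    (c * swap x y).IsCycle ∧ (c * swap x y).support = insert y c.support := by
  obtain ⟨t, ht⟩ := toList_eq_cons hx
  have hrot : (toList c x).rotate 1 = t ++ [x] := by simp [ht]
  have hnodup : (t ++ [x]).Nodup := hrot ▸ List.nodup_rotate.mpr (nodup_toList c x)
  have hc_eq : List.formPerm (t ++ [x]) = c := by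
    rw [← hrot, List.formPerm_rotate _ (nodup_toList c x), formPerm_toList,
      hc.cycleOf_eq (mem_support.mp hx)]
  have hsupp : (t ++ [x]).toFinset = c.support := by
    refine hc_eq ▸ (List.support_formPerm_of_nodup _ hnodup fun z hz => ?_).symm
    obtain rfl : t = [] := by simpa using congrArg List.length hz
    exact toList_ne_singleton c x x ht
  have hy' : y ∉ t ++ [x] := by rwa [← List.mem_toFinset, hsupp]
  have hnodup' : (t ++ [x, y]).Nodup := by
    simpa using hnodup.concat hy'
  rw [← hc_eq, ← List.formPerm_append_pair]
  refine ⟨List.isCycle_formPerm hnodup' (by simp), ?_⟩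
  rw [List.support_formPerm_of_nodup _ hnodup' fun z hz => by simpa using congrArg List.length hz,
    hc_eq, ← hsupp]
  ext; simp; tauto

def cycleLength (σ : Perm α) (x : α) : ℕ :=
  if σ x = x then 1 else #(σ.cycleOf x).support

theorem cycleType_eq_cons_of_apply_ne {σ : Perm α} {x : α} (hx : σ x ≠ x) :
    σ.cycleType = cycleLength σ x ::ₘ (σ * (σ.cycleOf x)⁻¹).cycleType := by
  have hc : σ.cycleOf x ∈ σ.cycleFactorsFinset :=
    cycleOf_mem_cycleFactorsFinset_iff.mpr (mem_support.mpr hx)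
  conv_lhs => rw [← inv_mul_cancel_right σ (σ.cycleOf x)]
  rw [(disjoint_mul_inv_of_mem_cycleFactorsFinset hc).cycleType_mul,
    (isCycle_cycleOf σ hx).cycleType, cycleLength, if_neg hx, add_comm, Multiset.singleton_add]

theorem cycleType_mul_swap_of_apply_ne {σ : Perm α} {x y : α} (hx : σ x ≠ x) (hy : σ y = y) :
    (σ * swap x y).cycleType = (cycleLength σ x + 1) ::ₘ (σ * (σ.cycleOf x)⁻¹).cycleType := by
  set c := σ.cycleOf x
  have hc : c ∈ σ.cycleFactorsFinset :=
    cycleOf_mem_cycleFactorsFinset_iff.mpr (mem_support.mpr hx)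
  have hxc : x ∈ c.support := mem_support_cycleOf_iff.mpr ⟨.rfl, mem_support.mpr hx⟩
  have hyc : y ∉ c.support := fun h => mem_support.mp (mem_cycleFactorsFinset_support_le hc h) hy
  obtain ⟨hC, hCsupp⟩ := (isCycle_cycleOf σ hx).mul_swap_of_mem_of_notMem hxc hyc
  have hdisj : (σ * c⁻¹).Disjoint (c * swap x y) := by
    refine disjoint_iff_disjoint_support.mpr (hCsupp ▸ Finset.disjoint_insert_right.mpr ⟨?_, ?_⟩)
    · rw [notMem_support, mul_apply, inv_eq_iff_eq.mpr (notMem_support.mp hyc).symm, hy]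
    · exact disjoint_iff_disjoint_support.mp (disjoint_mul_inv_of_mem_cycleFactorsFinset hc)
  have hq : cycleLength σ x = #c.support := if_neg hx
  rw [show σ * swap x y = σ * c⁻¹ * (c * swap x y) by group, hdisj.cycleType_mul,
    hC.cycleType, hCsupp, card_insert_of_notMem hyc, hq, add_comm, Multiset.singleton_add]

theorem cycleType_mul_swap_of_apply_eq {σ : Perm α} {x y : α} (hxy : x ≠ y) (hx : σ x = x)
    (hy : σ y = y) :
    (σ * swap x y).cycleType = 2 ::ₘ σ.cycleType := by
  have hdisj : σ.Disjoint (swap x y) := by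
    intro z
    by_cases hz : z = x ∨ z = y
    · rcases hz with rfl | rfl <;> simp [*]
    · push Not at hz; exact Or.inr (swap_apply_of_ne_of_ne hz.1 hz.2)
  rw [hdisj.cycleType_mul, (isCycle_swap hxy).cycleType, card_support_swap hxy, add_comm]
  rfl

theorem parts_partition_eq (σ : Perm α) :
    σ.partition.parts = σ.cycleType + Multiset.replicate (Fintype.card α - σ.cycleType.sum) 1 := by
  rw [sum_cycleType]; rfl

theorem parts_partition_mul_swap {σ : Perm α} {x y : α} {ρ : Multiset ℕ} (hxy : x ≠ y)
    (hy : σ y = y) (hρ : σ.partition.parts = 1 ::ₘ ρ) :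
    (σ * swap x y).partition.parts = (cycleLength σ x + 1) ::ₘ ρ.erase (cycleLength σ x) := by
  set q := cycleLength σ x
  set N := Fintype.card α
  have hparts : σ.partition.parts = σ.cycleType + Multiset.replicate (N - σ.cycleType.sum) 1 :=
    parts_partition_eq σ
  obtain ⟨M, hσ, hτ⟩ : ∃ M,
      σ.partition.parts = 1 ::ₘ q ::ₘ (M + Multiset.replicate (N - (q + 1 + M.sum)) 1) ∧
        (σ * swap x y).cycleType = (q + 1) ::ₘ M := by
    have hbound : (σ * swap x y).cycleType.sum ≤ N := (σ * swap x y).sum_cycleType_le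
    by_cases hx : σ x = x
    · have hq : q = 1 := if_pos hx
      have hτ : (σ * swap x y).cycleType = (q + 1) ::ₘ σ.cycleType := by
        rw [cycleType_mul_swap_of_apply_eq hxy hx hy, hq]
      refine ⟨σ.cycleType, ?_, hτ⟩
      rw [hτ, Multiset.sum_cons] at hbound
      rw [hparts, hq, show N - σ.cycleType.sum = N - (1 + 1 + σ.cycleType.sum) + 1 + 1 by omega]
      simp only [Multiset.replicate_succ, Multiset.add_cons]
    · have hσ : σ.cycleType = q ::ₘ _ := cycleType_eq_cons_of_apply_ne hx
      have hτ : (σ * swap x y).cycleType = (q + 1) ::ₘ _ := cycleType_mul_swap_of_apply_ne hx hy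
      generalize (σ * (σ.cycleOf x)⁻¹).cycleType = M at hσ hτ
      refine ⟨M, ?_, hτ⟩
      rw [hτ, Multiset.sum_cons] at hbound
      rw [hparts, hσ, Multiset.sum_cons, show N - (q + M.sum) = N - (q + 1 + M.sum) + 1 by omega]
      simp only [Multiset.replicate_succ, Multiset.add_cons, Multiset.cons_add]
  rw [hρ, Multiset.cons_inj_right] at hσ
  rw [parts_partition_eq, hτ, hσ, Multiset.erase_cons_head, Multiset.sum_cons, Multiset.cons_add]

theorem cycleLength_of_mem_cycleFactorsFinset {σ c : Perm α} (hc : c ∈ σ.cycleFactorsFinset)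
    {x : α} (hx : x ∈ c.support) : cycleLength σ x = #c.support := by
  rw [cycleLength, if_neg (mem_support.mp (mem_cycleFactorsFinset_support_le hc hx)),
    ← cycle_is_cycleOf hx hc]

theorem sum_cycleLength {M : Type*} [AddCommMonoid M] (σ : Perm α) (f : ℕ → M) :
    ∑ x, f (cycleLength σ x) = (σ.partition.parts.map fun p => p • f p).sum := by
  have hsupp : σ.support = σ.cycleFactorsFinset.biUnion support := by
    ext x
    simp only [mem_biUnion]
    exact mem_support_iff_mem_support_of_mem_cycleFactorsFinset
  have hdisj : (σ.cycleFactorsFinset : Set (Perm α)).PairwiseDisjoint support :=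
    fun c hc d hd hcd => (cycleFactorsFinset_pairwise_disjoint σ hc hd hcd).disjoint_support
  rw [← sum_add_sum_compl σ.support, parts_partition, Multiset.map_add, Multiset.sum_add,
    Multiset.map_replicate, Multiset.sum_replicate, cycleType_def, Multiset.map_map]
  congr 1
  · rw [hsupp, sum_biUnion hdisj]
    refine sum_congr rfl fun c hc => ?_
    rw [sum_congr rfl fun x hx => congrArg f (cycleLength_of_mem_cycleFactorsFinset hc hx)]
    simp
  · have hfix : ∀ x ∈ σ.supportᶜ, cycleLength σ x = 1 :=
      fun x hx => if_pos (notMem_support.mp (mem_compl.mp hx))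
    rw [sum_congr rfl fun x hx => congrArg f (hfix x hx), sum_const, card_compl, one_smul]

theorem sum_cycleLength_castSucc {M : Type*} [AddCancelCommMonoid M] {m : ℕ}
    {σ : Perm (Fin (m + 1))} {ρ : Multiset ℕ} (hlast : σ (Fin.last m) = Fin.last m)
    (hρ : σ.partition.parts = 1 ::ₘ ρ) (f : ℕ → M) :
    ∑ j : Fin m, f (cycleLength σ j.castSucc) = (ρ.map fun p => p • f p).sum := by
  have h := sum_cycleLength σ f
  rw [Fin.sum_univ_castSucc, hρ, Multiset.map_cons, Multiset.sum_cons, cycleLength, if_pos hlast,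
    one_smul, add_comm] at h
  exact add_left_cancel h

theorem cycleType_viaEmbedding {β : Type*} [Fintype β] [DecidableEq β] (σ : Perm α)
    (ι : α ↪ β) : (σ.viaEmbedding ι).cycleType = σ.cycleType := by
  rw [viaEmbedding]
  convert cycleType_extendDomain (ofInjective ι.1 ι.2)

end Equiv.Perm

section MonotoneTuples
variable {k m : ℕ} {M : Type*} [AddCommMonoid M]

theorem Fin.monotone_snoc_last {f : Fin k → Fin (m + 1)} (hf : Monotone f) :
    Monotone (Fin.snoc f (Fin.last m) : Fin (k + 1) → Fin (m + 1)) := by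
  intro a b hab
  induction b using Fin.lastCases with
  | last => simpa using Fin.le_last _
  | cast b =>
    induction a using Fin.lastCases with
    | last => exact absurd hab (Fin.castSucc_lt_last b).not_ge
    | cast a => simpa using hf (Fin.castSucc_le_castSucc_iff.mp hab)

theorem sum_monotone_filter_last_ne (Φ : (Fin (k + 1) → Fin (m + 1)) → M) :
    ∑ F ∈ {F | Monotone F} with ¬F (Fin.last k) = Fin.last m, Φ F =
      ∑ f : Fin (k + 1) → Fin m with Monotone f, Φ (Fin.castSucc ∘ f) := by
  have hne : ∀ F ∈ ({F | Monotone F} : Finset (Fin (k + 1) → Fin (m + 1))).filter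
      (fun F => ¬F (Fin.last k) = Fin.last m), ∀ t, F t ≠ Fin.last m := by
    simp only [mem_filter, mem_univ, true_and]
    exact fun F ⟨hF, hlast⟩ t =>
      ((hF (Fin.le_last t)).trans_lt (Fin.lt_last_iff_ne_last.mpr hlast)).ne
  refine sum_bij' (fun F hF t => (F t).castPred (hne F hF t)) (fun f _ => Fin.castSucc ∘ f)
    ?_ ?_ ?_ ?_ ?_
  · intro F hF
    simp only [mem_filter, mem_univ, true_and] at hF ⊢
    intro a b hab
    rw [← Fin.castSucc_le_castSucc_iff, Fin.castSucc_castPred, Fin.castSucc_castPred]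
    exact hF.1 hab
  · simp only [mem_filter, mem_univ, true_and]
    exact fun f hf => ⟨Fin.strictMono_castSucc.monotone.comp hf, (Fin.castSucc_lt_last _).ne⟩
  · intro F _
    ext t
    simp
  · intro f _
    ext t
    simp
  · intro F _
    rfl

theorem sum_monotone_filter_last_eq (Φ : (Fin (k + 1) → Fin (m + 1)) → M) :
    ∑ F ∈ {F | Monotone F} with F (Fin.last k) = Fin.last m, Φ F =
      ∑ f : Fin k → Fin (m + 1) with Monotone f, Φ (Fin.snoc f (Fin.last m)) := by
  refine sum_nbij' Fin.init (Fin.snoc · (Fin.last m)) ?_ ?_ ?_ ?_ ?_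
  · simp only [mem_filter, mem_univ, true_and, and_imp]
    exact fun F hF _ => hF.comp Fin.strictMono_castSucc.monotone
  · simp only [mem_filter, mem_univ, true_and]
    exact fun f hf => ⟨Fin.monotone_snoc_last hf, Fin.snoc_last _ _⟩
  · simp only [mem_filter, mem_univ, true_and, and_imp]
    intro F _ hF
    rw [← hF, Fin.snoc_init_self]
  · intro f _
    exact Fin.init_snoc _ _
  · simp only [mem_filter, mem_univ, true_and, and_imp]
    intro F _ hF
    rw [← hF, Fin.snoc_init_self]

end MonotoneTuples

theorem map_hEval {A B : Type*} [Ring A] [Ring B] (φ : A →+* B) {n : ℕ} (k : ℕ)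
    (g : Fin n → A) : φ (hEval k g) = hEval k (φ ∘ g) := by
  simp only [hEval, map_sum, map_list_prod, List.map_ofFn]
  rfl

theorem hEval_succ_eq_add_mul_last {A : Type*} [Ring A] {m : ℕ} (k : ℕ) (g : Fin (m + 1) → A) :
    hEval (k + 1) g = hEval (k + 1) (fun i => g i.castSucc) + hEval k g * g (Fin.last m) := by
  rw [hEval, hEval, hEval, sum_mul,
    ← sum_filter_not_add_sum_filter _ (fun F => F (Fin.last k) = Fin.last m),
    sum_monotone_filter_last_ne, sum_monotone_filter_last_eq]
  congr 1
  refine sum_congr rfl fun f _ => ?_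
  rw [List.ofFn_succ', List.prod_concat]
  simp

noncomputable def castSuccRingHom (m : ℕ) :
    MonoidAlgebra ℤ (Perm (Fin m)) →+* MonoidAlgebra ℤ (Perm (Fin (m + 1))) :=
  MonoidAlgebra.mapDomainRingHom ℤ (viaEmbeddingHom Fin.castSuccEmb)

theorem coeffOf_castSuccRingHom {m : ℕ} (x : MonoidAlgebra ℤ (Perm (Fin m)))
    (σ : Perm (Fin m)) :
    coeffOf (castSuccRingHom m x) (σ.viaEmbedding Fin.castSuccEmb) = coeffOf x σ :=
  Finsupp.mapDomain_apply (viaEmbeddingHom_injective _) x.coeff σ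

theorem JM_eq_sum_Iio {n : ℕ} (i : Fin n) :
    JM n i = ∑ j < i, MonoidAlgebra.of ℤ (Perm (Fin n)) (swap j i) := by
  rw [JM, filter_gt_eq_Iio]

theorem castSuccRingHom_JM {m : ℕ} (i : Fin m) :
    castSuccRingHom m (JM m i) = JM (m + 1) i.castSucc := by
  rw [JM_eq_sum_Iio, JM_eq_sum_Iio, map_sum, Fin.sum_Iio_castSucc]
  refine sum_congr rfl fun j _ => ?_
  simp [castSuccRingHom, viaEmbeddingHom_apply, viaEmbedding_swap]

theorem coeffOf_add {G : Type*} (x y : MonoidAlgebra ℤ G) (g : G) :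
    coeffOf (x + y) g = coeffOf x g + coeffOf y g := rfl

theorem coeffOf_mul_JM_last {m : ℕ} (x : MonoidAlgebra ℤ (Perm (Fin (m + 1))))
    (σ : Perm (Fin (m + 1))) :
    coeffOf (x * JM (m + 1) (Fin.last m)) σ =
      ∑ j : Fin m, coeffOf x (σ * swap j.castSucc (Fin.last m)) := by
  rw [JM_eq_sum_Iio, Fin.Iio_last_eq_map, sum_map, mul_sum, coeffOf, MonoidAlgebra.coeff_sum,
    Finset.sum_apply']
  refine sum_congr rfl fun j _ => ?_
  simp [MonoidAlgebra.of_apply, coeffOf]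

theorem hEval_succ_JM_succ (m k : ℕ) :
    hEval (k + 1) (JM (m + 1)) =
      castSuccRingHom m (hEval (k + 1) (JM m)) +
        hEval k (JM (m + 1)) * JM (m + 1) (Fin.last m) := by
  rw [hEval_succ_eq_add_mul_last, map_hEval]
  congr 2
  exact funext fun i => (castSuccRingHom_JM i).symm

theorem fullCycleType_eq_parts_partition {n : ℕ} (σ : Perm (Fin n)) :
    fullCycleType σ = σ.partition.parts := by
  rw [fullCycleType, parts_partition, Fintype.card_fin, sum_cycleType]

theorem exists_fullCycleType_eq {ρ : Multiset ℕ} (hρ : ∀ p ∈ ρ, 1 ≤ p) :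
    ∃ (m : ℕ) (σ : Perm (Fin m)), fullCycleType σ = ρ := by
  set ones := ρ.filter fun p => ¬2 ≤ p
  have hones : ones = Multiset.replicate (Multiset.card ones) 1 :=
    Multiset.eq_replicate_card.mpr fun p hp => by
      have := hρ p (Multiset.mem_of_mem_filter hp)
      have := Multiset.of_mem_filter hp
      omega
  have hsplit : ρ = ρ.filter (2 ≤ ·) + Multiset.replicate (Multiset.card ones) 1 := by
    rw [← hones, Multiset.filter_add_not]
  have hsum : ρ.sum = (ρ.filter (2 ≤ ·)).sum + Multiset.card ones := by
    conv_lhs => rw [hsplit]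
    simp
  obtain ⟨σ, hσ⟩ := (exists_with_cycleType_iff (α := Fin ρ.sum) (m := ρ.filter (2 ≤ ·))).mpr
    ⟨by rw [Fintype.card_fin, hsum]; omega, fun p hp => Multiset.of_mem_filter hp⟩
  refine ⟨ρ.sum, σ, ?_⟩
  rw [fullCycleType, hσ, hsum, Nat.add_sub_cancel_left, ← hsplit]

theorem fullCycleType_viaEmbedding_castSucc {m : ℕ} (σ : Perm (Fin m)) :
    fullCycleType (σ.viaEmbedding Fin.castSuccEmb) = 1 ::ₘ fullCycleType σ := by
  have hle : σ.cycleType.sum ≤ m := by simpa using σ.sum_cycleType_le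
  rw [fullCycleType, fullCycleType, cycleType_viaEmbedding,
    show m + 1 - σ.cycleType.sum = m - σ.cycleType.sum + 1 by omega, Multiset.replicate_succ,
    Multiset.add_cons]

/-- Lassalle's first induction: `a^k_{ρ∪(1)} = a^k_ρ + Σ_i ρ_i a^{k-1}_{ρ\(ρ_i)∪(ρ_i+1)}`,
where `a^k_λ` is the coefficient of any permutation of cycle type `λ` in
`h_k(J_1,…,J_n)` (partitions are encoded as multisets of parts). -/
theorem lassalle_first_induction (a : ℕ → Multiset ℕ → ℤ)
    (ha : ∀ (N k : ℕ) (σ : Equiv.Perm (Fin N)),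
      coeffOf (hEval k (JM N)) σ = a k (fullCycleType σ))
    (k : ℕ) (hk : 1 ≤ k) (ρ : Multiset ℕ) (hρ : ∀ p ∈ ρ, 1 ≤ p) :
    a k (1 ::ₘ ρ) =
      a k ρ + (ρ.map (fun (p : ℕ) => (p : ℤ) * a (k-1) ((p+1) ::ₘ ρ.erase p))).sum := by
  obtain ⟨k, rfl⟩ := Nat.exists_eq_add_of_le' hk
  rw [Nat.add_sub_cancel]
  obtain ⟨m, σ', hσ'⟩ := exists_fullCycleType_eq hρ
  set σ := σ'.viaEmbedding Fin.castSuccEmb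
  have hσ : σ.partition.parts = 1 ::ₘ ρ := by
    rw [← fullCycleType_eq_parts_partition, fullCycleType_viaEmbedding_castSucc, hσ']
  have hlast : σ (Fin.last m) = Fin.last m :=
    viaEmbedding_apply_of_notMem _ _ _ fun ⟨i, hi⟩ => Fin.castSucc_ne_last i hi
  set F : ℕ → ℤ := fun p => a k ((p + 1) ::ₘ ρ.erase p)
  have hjoin (j : Fin m) :
      coeffOf (hEval k (JM (m + 1))) (σ * swap j.castSucc (Fin.last m)) =
        F (cycleLength σ j.castSucc) := by
    rw [ha, fullCycleType_eq_parts_partition,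
      parts_partition_mul_swap (Fin.castSucc_ne_last j) hlast hσ]
  calc a (k + 1) (1 ::ₘ ρ) = coeffOf (hEval (k + 1) (JM (m + 1))) σ := by
        rw [ha, fullCycleType_viaEmbedding_castSucc, hσ']
    _ = a (k + 1) ρ + ∑ j : Fin m, F (cycleLength σ j.castSucc) := by
        rw [hEval_succ_JM_succ, coeffOf_add, coeffOf_castSuccRingHom, coeffOf_mul_JM_last, ha,
          hσ']
        simp only [hjoin]
    _ = _ := by rw [sum_cycleLength_castSucc hlast hσ]; simp only [nsmul_eq_mul, F]
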